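/- arXiv:1709.09519 — 9 statements merged into one kernel-verified Lean document; each statement's English description precedes it below -/
import Mathlib

section
/- In a fibration category, if f : a → b is a weak equivalence between cofibrant objects, then f is a homotopy equivalence; conversely, if f is a homotopy equivalence between cofibrant objects, then f is a weak equivalence. -/
/-!
A homotopy `H : x → Py` from `f` to a weak equivalence `g` makes `H` and hence `f = H ≫ π₀`
weak equivalences, so 2-out-of-6 turns a homotopy equivalence into a weak equivalence.

Conversely, Brown's factorization through `c = a ×_b Pb` writes a weak equivalence
`f = j ≫ q` with `j` a section of an acyclic fibration `r : c → a` and `q` an acyclic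
fibration. Cofibrancy of `b` gives a section `s` of `q`, and `s ≫ r` is a homotopy inverse:
`s ≫ r ≫ f ∼ s ≫ q = 𝟙`, while `f ≫ s` and `j` agree after `q`, and maps out of a
cofibrant object that agree after an acyclic fibration become homotopic after any
postcomposition.
-/

open CategoryTheory CategoryTheory.Limits

universe v u

namespace Paper

variable {C : Type u} [Category.{v} C]

/-- A fibration category structure on a category `C`. -/
structure FibCatStruct (C : Type u) [Category.{v} C] where
  /-- weak equivalences -/
  Weq : MorphismProperty C
  /-- fibrations -/
  Fib : MorphismProperty C
  weq_id : ∀ x : C, Weq (𝟙 x)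
  weq_comp : ∀ {x y z : C} (f : x ⟶ y) (g : y ⟶ z), Weq f → Weq g → Weq (f ≫ g)
  fib_id : ∀ x : C, Fib (𝟙 x)
  fib_comp : ∀ {x y z : C} (f : x ⟶ y) (g : y ⟶ z), Fib f → Fib g → Fib (f ≫ g)
  /-- (F1): terminal object, all objects fibrant -/
  term : C
  isTerminal : IsTerminal term
  all_fibrant : ∀ x : C, Fib (isTerminal.from x)
  /-- (F2): pullbacks along fibrations exist -/
  pullback_exists : ∀ {x y z : C} (f : x ⟶ z) (g : y ⟶ z), Fib g → HasPullback f g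
  fib_stable : ∀ {p x y z : C} {fst : p ⟶ x} {snd : p ⟶ y} {f : x ⟶ z} {g : y ⟶ z},
    IsPullback fst snd f g → Fib g → Fib fst
  acyclic_fib_stable : ∀ {p x y z : C} {fst : p ⟶ x} {snd : p ⟶ y} {f : x ⟶ z} {g : y ⟶ z},
    IsPullback fst snd f g → Fib g → Weq g → Weq fst
  /-- (F3): factorization as weak equivalence followed by fibration -/
  factor : ∀ {x y : C} (f : x ⟶ y), ∃ (z : C) (i : x ⟶ z) (q : z ⟶ y),
    Weq i ∧ Fib q ∧ i ≫ q = f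
  /-- (F4): 2-out-of-6 for weak equivalences -/
  two_out_of_six : ∀ {a b c d : C} (f : a ⟶ b) (g : b ⟶ c) (h : c ⟶ d),
    Weq (f ≫ g) → Weq (g ≫ h) → Weq f ∧ Weq g ∧ Weq h ∧ Weq (f ≫ g ≫ h)

variable (F : FibCatStruct C)

/-- A path object for `x`: a factorization of the diagonal `x → x × x` as a
weak equivalence followed by a fibration (the product is given by an explicit
binary product cone). -/
structure FibPathObject (F : FibCatStruct C) (x : C) where
  P : C
  σ : x ⟶ P
  π₀ : P ⟶ x
  π₁ : P ⟶ x
  σ_weq : F.Weq σ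
  σ_π₀ : σ ≫ π₀ = 𝟙 x
  σ_π₁ : σ ≫ π₁ = 𝟙 x
  prod : C
  p₀ : prod ⟶ x
  p₁ : prod ⟶ x
  isProd : IsLimit (BinaryFan.mk p₀ p₁)
  π : P ⟶ prod
  π_p₀ : π ≫ p₀ = π₀
  π_p₁ : π ≫ p₁ = π₁
  π_fib : F.Fib π

/-- `f` and `g` are homotopic if there is a homotopy `H` into some path object. -/
def FibHomotopic (F : FibCatStruct C) {x y : C} (f g : x ⟶ y) : Prop :=
  ∃ (Po : FibPathObject F y) (H : x ⟶ Po.P), H ≫ Po.π₀ = f ∧ H ≫ Po.π₁ = g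

/-- `f` is a homotopy equivalence if it admits an inverse up to homotopy. -/
def FibHtpyEquiv (F : FibCatStruct C) {x y : C} (f : x ⟶ y) : Prop :=
  ∃ g : y ⟶ x, FibHomotopic F (f ≫ g) (𝟙 x) ∧ FibHomotopic F (g ≫ f) (𝟙 y)

/-- An object `a` is cofibrant if every acyclic fibration admits lifts against
morphisms from `a`. -/
def Cofibrant (F : FibCatStruct C) (a : C) : Prop :=
  ∀ {x y : C} (p : x ⟶ y), F.Fib p → F.Weq p → ∀ f : a ⟶ y, ∃ g : a ⟶ x, g ≫ p = f

end Paper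

namespace Paper

variable {C : Type u} [Category.{v} C]

theorem isPullback_of_isLimit_binaryFan {P P' X X' Y : C} {pX : P ⟶ X} {pY : P ⟶ Y}
    {pX' : P' ⟶ X'} {pY' : P' ⟶ Y} (hP : IsLimit (BinaryFan.mk pX pY))
    (hP' : IsLimit (BinaryFan.mk pX' pY')) {f : X ⟶ X'} {ψ : P ⟶ P'}
    (h₀ : ψ ≫ pX' = pX ≫ f) (h₁ : ψ ≫ pY' = pY) : IsPullback ψ pX pX' f := by
  have ext : ∀ {W : C} {u v : W ⟶ P}, u ≫ pX = v ≫ pX → u ≫ pY = v ≫ pY → u = v :=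
    BinaryFan.IsLimit.hom_ext hP
  have ext' : ∀ {W : C} {u v : W ⟶ P'},
      u ≫ pX' = v ≫ pX' → u ≫ pY' = v ≫ pY' → u = v :=
    BinaryFan.IsLimit.hom_ext hP'
  let lift (s : PullbackCone pX' f) : s.pt ⟶ P := hP.lift (BinaryFan.mk s.snd (s.fst ≫ pY'))
  have lift_pX (s : PullbackCone pX' f) : lift s ≫ pX = s.snd := hP.fac _ ⟨.left⟩
  have lift_pY (s : PullbackCone pX' f) : lift s ≫ pY = s.fst ≫ pY' := hP.fac _ ⟨.right⟩
  refine IsPullback.of_isLimit' ⟨h₀⟩ (PullbackCone.IsLimit.mk h₀ lift (fun s => ext' ?_ ?_)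
    lift_pX fun s m hm₁ hm₂ => ext ?_ ?_)
  · rw [Category.assoc, h₀, reassoc_of% (lift_pX s), s.condition]
  · rw [Category.assoc, h₁, lift_pY]
  · rw [hm₂, lift_pX]
  · rw [← h₁, reassoc_of% hm₁, h₁, lift_pY]

namespace FibCatStruct

variable (F : FibCatStruct C)

theorem weq_of_postcomp {x y z : C} {f : x ⟶ y} {g : y ⟶ z}
    (hfg : F.Weq (f ≫ g)) (hg : F.Weq g) : F.Weq f :=
  (F.two_out_of_six f g (𝟙 z) hfg (by simpa using hg)).1

theorem weq_of_precomp {x y z : C} {f : x ⟶ y} {g : y ⟶ z}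
    (hf : F.Weq f) (hfg : F.Weq (f ≫ g)) : F.Weq g :=
  (F.two_out_of_six (𝟙 x) f g (by simpa using hf) hfg).2.2.1

theorem weq_left_of_comp_eq_id {x y : C} {s : x ⟶ y} {r : y ⟶ x} (h : s ≫ r = 𝟙 x)
    (hr : F.Weq r) : F.Weq s :=
  F.weq_of_postcomp (h ▸ F.weq_id x) hr

theorem weq_right_of_comp_eq_id {x y : C} {s : x ⟶ y} {r : y ⟶ x} (h : s ≫ r = 𝟙 x)
    (hs : F.Weq s) : F.Weq r :=
  F.weq_of_precomp hs (h ▸ F.weq_id x)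

theorem hasBinaryProduct (F : FibCatStruct C) (x y : C) : HasBinaryProduct x y :=
  have := F.pullback_exists (F.isTerminal.from x) _ (F.all_fibrant y)
  HasLimit.mk ⟨_, isProductOfIsTerminalIsPullback _ _ _ _ F.isTerminal
    (pullbackIsPullback (F.isTerminal.from x) (F.isTerminal.from y))⟩

theorem fib_fst_of_isLimit {P x y : C} {p₀ : P ⟶ x} {p₁ : P ⟶ y}
    (h : IsLimit (BinaryFan.mk p₀ p₁)) : F.Fib p₀ :=
  F.fib_stable (IsPullback.of_is_product' h F.isTerminal) (F.all_fibrant y)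

theorem fib_snd_of_isLimit {P x y : C} {p₀ : P ⟶ x} {p₁ : P ⟶ y}
    (h : IsLimit (BinaryFan.mk p₀ p₁)) : F.Fib p₁ :=
  F.fib_stable (IsPullback.of_is_product' h F.isTerminal).flip (F.all_fibrant x)

theorem weq_diagonal {E B : C} {p : E ⟶ B} [HasPullback p p] (hpf : F.Fib p) (hpw : F.Weq p) :
    F.Weq (pullback.diagonal p) :=
  F.weq_left_of_comp_eq_id (pullback.diagonal_fst p)
    (F.acyclic_fib_stable (IsPullback.of_hasPullback p p) hpf hpw)

theorem exists_pathObject (x : C) : Nonempty (FibPathObject F x) := by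
  have := F.hasBinaryProduct x x
  obtain ⟨P, σ, π, hσ, hπ, hfac⟩ := F.factor (prod.lift (𝟙 x) (𝟙 x))
  exact ⟨{
    P := P
    σ := σ
    π₀ := π ≫ prod.fst
    π₁ := π ≫ prod.snd
    σ_weq := hσ
    σ_π₀ := by rw [← Category.assoc, hfac, prod.lift_fst]
    σ_π₁ := by rw [← Category.assoc, hfac, prod.lift_snd]
    prod := x ⨯ x
    p₀ := prod.fst
    p₁ := prod.snd
    isProd := prodIsProd x x
    π := π
    π_p₀ := rfl
    π_p₁ := rfl
    π_fib := hπ }⟩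

end FibCatStruct

namespace FibPathObject

variable {F : FibCatStruct C} {x : C} (Po : FibPathObject F x)

theorem π₀_weq : F.Weq Po.π₀ := F.weq_right_of_comp_eq_id Po.σ_π₀ Po.σ_weq

theorem π₁_weq : F.Weq Po.π₁ := F.weq_right_of_comp_eq_id Po.σ_π₁ Po.σ_weq

theorem π₀_fib : F.Fib Po.π₀ :=
  Po.π_p₀ ▸ F.fib_comp _ _ Po.π_fib (F.fib_fst_of_isLimit Po.isProd)

def prodLift {w : C} (g₀ g₁ : w ⟶ x) : w ⟶ Po.prod :=
  Po.isProd.lift (BinaryFan.mk g₀ g₁)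

@[simp]
theorem prodLift_p₀ {w : C} (g₀ g₁ : w ⟶ x) : Po.prodLift g₀ g₁ ≫ Po.p₀ = g₀ :=
  Po.isProd.fac _ ⟨.left⟩

@[simp]
theorem prodLift_p₁ {w : C} (g₀ g₁ : w ⟶ x) : Po.prodLift g₀ g₁ ≫ Po.p₁ = g₁ :=
  Po.isProd.fac _ ⟨.right⟩

theorem prod_hom_ext {w : C} {u v : w ⟶ Po.prod} (h₀ : u ≫ Po.p₀ = v ≫ Po.p₀)
    (h₁ : u ≫ Po.p₁ = v ≫ Po.p₁) : u = v :=
  BinaryFan.IsLimit.hom_ext Po.isProd h₀ h₁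

end FibPathObject

namespace FibHomotopic

variable {F : FibCatStruct C} {x y : C} {f g : x ⟶ y}

theorem precomp (h : FibHomotopic F f g) {w : C} (s : w ⟶ x) :
    FibHomotopic F (s ≫ f) (s ≫ g) := by
  obtain ⟨Po, H, h₀, h₁⟩ := h
  exact ⟨Po, s ≫ H, by rw [Category.assoc, h₀], by rw [Category.assoc, h₁]⟩

theorem weq_of_weq_right (h : FibHomotopic F f g) (hg : F.Weq g) : F.Weq f := by
  obtain ⟨Po, H, rfl, rfl⟩ := h
  exact F.weq_comp _ _ (F.weq_of_postcomp hg Po.π₁_weq) Po.π₀_weq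

end FibHomotopic

theorem FibHtpyEquiv.weq {F : FibCatStruct C} {x y : C} {f : x ⟶ y} (h : FibHtpyEquiv F f) :
    F.Weq f := by
  obtain ⟨g, hfg, hgf⟩ := h
  exact (F.two_out_of_six f g f (hfg.weq_of_weq_right (F.weq_id x))
    (hgf.weq_of_weq_right (F.weq_id y))).2.2.1

theorem FibCatStruct.exists_brown_factorization (F : FibCatStruct C) {a b : C} (f : a ⟶ b) :
    ∃ (c : C) (j : a ⟶ c) (r : c ⟶ a) (q : c ⟶ b),
      j ≫ r = 𝟙 a ∧ j ≫ q = f ∧ F.Weq r ∧ F.Fib q ∧ FibHomotopic F (r ≫ f) q := by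
  obtain ⟨Pb⟩ := F.exists_pathObject b
  have := F.pullback_exists f Pb.π₀ Pb.π₀_fib
  have := F.hasBinaryProduct a b
  let r := pullback.fst f Pb.π₀
  let t := pullback.snd f Pb.π₀
  let q := t ≫ Pb.π₁
  have hψ : IsPullback (Pb.prodLift (prod.fst ≫ f) prod.snd) prod.fst Pb.p₀ f :=
    isPullback_of_isLimit_binaryFan (prodIsProd a b) Pb.isProd (Pb.prodLift_p₀ _ _)
      (Pb.prodLift_p₁ _ _)
  have hφ : IsPullback (prod.lift r q) t (Pb.prodLift (prod.fst ≫ f) prod.snd) Pb.π := by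
    refine (IsPullback.of_bot ?_ ?_ hψ).flip
    · rw [prod.lift_fst, Pb.π_p₀]
      exact (IsPullback.of_hasPullback f Pb.π₀).flip
    · refine Pb.prod_hom_ext ?_ ?_
      · rw [Category.assoc, Category.assoc, Pb.π_p₀, Pb.prodLift_p₀, prod.lift_fst_assoc]
        exact pullback.condition.symm
      · rw [Category.assoc, Category.assoc, Pb.π_p₁, Pb.prodLift_p₁, prod.lift_snd]
  have hj : 𝟙 a ≫ f = (f ≫ Pb.σ) ≫ Pb.π₀ := by
    rw [Category.id_comp, Category.assoc, Pb.σ_π₀, Category.comp_id]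
  refine ⟨pullback f Pb.π₀, pullback.lift _ _ hj, r, q, pullback.lift_fst _ _ _, ?_,
    F.acyclic_fib_stable (IsPullback.of_hasPullback f Pb.π₀) Pb.π₀_fib Pb.π₀_weq, ?_,
    ⟨Pb, t, pullback.condition.symm, rfl⟩⟩
  · rw [pullback.lift_snd_assoc, Category.assoc, Pb.σ_π₁, Category.comp_id]
  · rw [← prod.lift_snd r q]
    exact F.fib_comp _ _ (F.fib_stable hφ Pb.π_fib) (F.fib_snd_of_isLimit (prodIsProd a b))

namespace Cofibrant

variable {F : FibCatStruct C} {w : C}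

theorem exists_lift_of_fib_of_weq_comp (hw : Cofibrant F w) {Q D E : C} {q : Q ⟶ D}
    (hq : F.Fib q) (e : E ⟶ Q) (he : F.Weq (e ≫ q)) (g : w ⟶ D) :
    ∃ l : w ⟶ Q, l ≫ q = g := by
  -- factoring `e` as `ι ≫ ρ` turns `ρ ≫ q` into an acyclic fibration
  obtain ⟨N, ι, ρ, hι, hρ, rfl⟩ := F.factor e
  rw [Category.assoc] at he
  obtain ⟨l, hl⟩ := hw (ρ ≫ q) (F.fib_comp _ _ hρ hq) (F.weq_of_precomp hι he) g
  exact ⟨l ≫ ρ, by rw [Category.assoc, hl]⟩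

theorem homotopic_comp_of_comp_eq (hw : Cofibrant F w) {E B Z : C} {p : E ⟶ B}
    (hpf : F.Fib p) (hpw : F.Weq p) {u v : w ⟶ E} (huv : u ≫ p = v ≫ p) (k : E ⟶ Z) :
    FibHomotopic F (u ≫ k) (v ≫ k) := by
  obtain ⟨PZ⟩ := F.exists_pathObject Z
  have := F.pullback_exists p p hpf
  let m := PZ.prodLift (pullback.fst p p ≫ k) (pullback.snd p p ≫ k)
  have := F.pullback_exists m PZ.π PZ.π_fib
  have hδ : pullback.diagonal p ≫ m = (k ≫ PZ.σ) ≫ PZ.π := PZ.prod_hom_ext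
    (by simp [m, PZ.π_p₀, PZ.σ_π₀]) (by simp [m, PZ.π_p₁, PZ.σ_π₁])
  -- `E → (E ×_B E) ×_{Z × Z} PZ` lies over the diagonal of `p`, a weak equivalence,
  -- so `(u, v) : w → E ×_B E` lifts along the fibration to `E ×_B E`
  obtain ⟨l, hl⟩ := hw.exists_lift_of_fib_of_weq_comp
    (F.fib_stable (IsPullback.of_hasPullback m PZ.π) PZ.π_fib) (pullback.lift _ _ hδ)
    (by rw [pullback.lift_fst]; exact F.weq_diagonal hpf hpw) (pullback.lift u v huv)
  have hQ : pullback.snd m PZ.π ≫ PZ.π = pullback.fst m PZ.π ≫ m := pullback.condition.symm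
  refine ⟨PZ, l ≫ pullback.snd m PZ.π, ?_, ?_⟩
  · rw [Category.assoc, ← PZ.π_p₀, reassoc_of% hQ, reassoc_of% hl, PZ.prodLift_p₀,
      pullback.lift_fst_assoc]
  · rw [Category.assoc, ← PZ.π_p₁, reassoc_of% hQ, reassoc_of% hl, PZ.prodLift_p₁,
      pullback.lift_snd_assoc]

end Cofibrant

end Paper

open Paper in
/-- In a fibration category, a morphism between cofibrant objects
is a weak equivalence iff it is a homotopy equivalence. -/
theorem weq_iff_htpyEquiv_of_cofibrant {C : Type u} [Category.{v} C]
    (F : Paper.FibCatStruct C) {a b : C} (ha : Cofibrant F a) (hb : Cofibrant F b)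
    (f : a ⟶ b) :
    F.Weq f ↔ FibHtpyEquiv F f := by
  refine ⟨fun hf => ?_, FibHtpyEquiv.weq⟩
  obtain ⟨c, j, r, q, hjr, hjq, hr, hq, hrq⟩ := F.exists_brown_factorization f
  have hqw : F.Weq q := F.weq_of_precomp (F.weq_left_of_comp_eq_id hjr hr) (hjq ▸ hf)
  obtain ⟨s, hs⟩ := hb q hq hqw (𝟙 b)
  refine ⟨s ≫ r, ?_, ?_⟩
  · have hsq : (f ≫ s) ≫ q = j ≫ q := by rw [Category.assoc, hs, Category.comp_id, hjq]
    simpa only [Category.assoc, hjr] using ha.homotopic_comp_of_comp_eq hq hqw hsq r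
  · simpa only [Category.assoc, hs] using hrq.precomp s
end

section
/- In a fibration category, weak equivalences between cofibrant objects satisfy the 2-out-of-6 property as witnessed by homotopy equivalences: given f : a → b with homotopy inverse g and homotopies H from g∘f to id_a and G from f∘g to id_b, f is a weak equivalence. -/
open CategoryTheory CategoryTheory.Limits

universe v u

open Paper in
/-- In a fibration category, given `f : a ⟶ b` between cofibrant
objects with a homotopy inverse `g`, witnessed by explicit homotopies `H` from
`g ∘ f` to `id_a` and `G` from `f ∘ g` to `id_b`, the morphism `f` is a weak
equivalence. -/
theorem weq_of_htpyEquiv_witnessed {C : Type u} [Category.{v} C]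
    (F : Paper.FibCatStruct C) {a b : C} (ha : Cofibrant F a) (hb : Cofibrant F b)
    (f : a ⟶ b) (g : b ⟶ a)
    (Pa : FibPathObject F a) (H : a ⟶ Pa.P)
    (hH₀ : H ≫ Pa.π₀ = f ≫ g) (hH₁ : H ≫ Pa.π₁ = 𝟙 a)
    (Pb : FibPathObject F b) (G : b ⟶ Pb.P)
    (hG₀ : G ≫ Pb.π₀ = g ≫ f) (hG₁ : G ≫ Pb.π₁ = 𝟙 b) :
    F.Weq f := by
  -- 2-out-of-3 consequences of 2-out-of-6
  have cancel_left : ∀ {x y z : C} (u : x ⟶ y) (v : y ⟶ z),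
      F.Weq u → F.Weq (u ≫ v) → F.Weq v := by
    intro x y z u v hu huv
    have := F.two_out_of_six (𝟙 x) u v (by simpa using hu) huv
    exact this.2.2.1
  have cancel_right : ∀ {x y z : C} (u : x ⟶ y) (v : y ⟶ z),
      F.Weq v → F.Weq (u ≫ v) → F.Weq u := by
    intro x y z u v hv huv
    have := F.two_out_of_six u v (𝟙 z) huv (by simpa using hv)
    exact this.1
  -- a map with a homotopy to the identity is a weak equivalence
  have key : ∀ {x : C} (P : FibPathObject F x) (K : x ⟶ P.P) (k : x ⟶ x),
      K ≫ P.π₀ = k → K ≫ P.π₁ = 𝟙 x → F.Weq k := by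
    intro x P K k h0 h1
    have hπ₁ : F.Weq P.π₁ :=
      cancel_left P.σ P.π₁ P.σ_weq (by rw [P.σ_π₁]; exact F.weq_id x)
    have hπ₀ : F.Weq P.π₀ :=
      cancel_left P.σ P.π₀ P.σ_weq (by rw [P.σ_π₀]; exact F.weq_id x)
    have hK : F.Weq K :=
      cancel_right K P.π₁ hπ₁ (by rw [h1]; exact F.weq_id x)
    have := F.weq_comp K P.π₀ hK hπ₀
    rwa [h0] at this
  have hfg : F.Weq (f ≫ g) := key Pa H (f ≫ g) hH₀ hH₁
  have hgf : F.Weq (g ≫ f) := key Pb G (g ≫ f) hG₀ hG₁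
  exact (F.two_out_of_six f g f hfg hgf).1
end

section
/- In a tribe, every anodyne morphism is a homotopy equivalence. Concretely, if f : x → y is anodyne, then there exists a retraction r : y → x with r∘f = id_x, and f∘r is homotopic to id_y via a homotopy obtained by lifting against the path fibration Py → y × y. -/
open CategoryTheory CategoryTheory.Limits

universe v u

namespace Paper

variable {T : Type u} [Category.{v} T]

/-- A morphism is anodyne (w.r.t. a class of fibrations) if it has the left
lifting property against all fibrations. -/
def Anodyne (Fib : MorphismProperty T) : MorphismProperty T :=
  fun _ _ i => ∀ ⦃u w : T⦄ (g : u ⟶ w), Fib g → HasLiftingProperty i g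

/-- A tribe structure on a category `T`. -/
structure TribeStruct (T : Type u) [Category.{v} T] where
  /-- fibrations -/
  Fib : MorphismProperty T
  fib_id : ∀ x : T, Fib (𝟙 x)
  fib_comp : ∀ {x y z : T} (f : x ⟶ y) (g : y ⟶ z), Fib f → Fib g → Fib (f ≫ g)
  /-- (T1): terminal object, all objects fibrant -/
  term : T
  isTerminal : IsTerminal term
  all_fibrant : ∀ x : T, Fib (isTerminal.from x)
  /-- (T2): pullbacks along fibrations exist and fibrations are stable -/
  pullback_exists : ∀ {x y z : T} (f : x ⟶ z) (g : y ⟶ z), Fib g → HasPullback f g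
  fib_stable : ∀ {p x y z : T} {fst : p ⟶ x} {snd : p ⟶ y} {f : x ⟶ z} {g : y ⟶ z},
    IsPullback fst snd f g → Fib g → Fib fst
  /-- (T3): factorization as anodyne followed by fibration -/
  factor : ∀ {x y : T} (f : x ⟶ y), ∃ (z : T) (i : x ⟶ z) (q : z ⟶ y),
    Anodyne Fib i ∧ Fib q ∧ i ≫ q = f
  /-- (T4): anodyne morphisms are stable under pullback along fibrations -/
  anodyne_stable : ∀ {p x y z : T} {fst : p ⟶ x} {snd : p ⟶ y} {f : x ⟶ z} {g : y ⟶ z},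
    IsPullback fst snd f g → Anodyne Fib f → Fib g → Anodyne Fib snd

/-- A path object for `x` in a tribe: a factorization of the diagonal
`x → x × x` as an anodyne morphism followed by a fibration (the product is
presented by an explicit binary product cone). -/
structure PathObject (R : TribeStruct T) (x : T) where
  P : T
  σ : x ⟶ P
  π₀ : P ⟶ x
  π₁ : P ⟶ x
  σ_anodyne : Anodyne R.Fib σ
  σ_π₀ : σ ≫ π₀ = 𝟙 x
  σ_π₁ : σ ≫ π₁ = 𝟙 x
  prod : T
  p₀ : prod ⟶ x
  p₁ : prod ⟶ x
  isProd : IsLimit (BinaryFan.mk p₀ p₁)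
  π : P ⟶ prod
  π_p₀ : π ≫ p₀ = π₀
  π_p₁ : π ≫ p₁ = π₁
  π_fib : R.Fib π

/-- Homotopy of morphisms in a tribe. -/
def Homotopic (R : TribeStruct T) {x y : T} (f g : x ⟶ y) : Prop :=
  ∃ (Po : PathObject R y) (H : x ⟶ Po.P), H ≫ Po.π₀ = f ∧ H ≫ Po.π₁ = g

/-- Homotopy equivalences in a tribe. -/
def IsHtpyEquiv (R : TribeStruct T) {x y : T} (f : x ⟶ y) : Prop :=
  ∃ g : y ⟶ x, Homotopic R (f ≫ g) (𝟙 x) ∧ Homotopic R (g ≫ f) (𝟙 y)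

/-- Homotopy equivalences (= weak equivalences) of a tribe as a morphism property. -/
def hW (R : TribeStruct T) : MorphismProperty T :=
  fun _ _ f => IsHtpyEquiv R f

end Paper


/-! Lifting against the terminal map of `x` retracts an anodyne `f : x ⟶ y`. More generally, two maps
out of `y` that agree after an anodyne `f` are homotopic: a homotopy is a lift in the square formed
by `f` and the path fibration `Pz ⟶ z × z`. Since `f ≫ r = 𝟙 x`, this applies to `r ≫ f` and `𝟙 y`. -/

namespace Paper

variable {T : Type u} [Category.{v} T] (R : TribeStruct T)

theorem TribeStruct.nonempty_pathObject (z : T) : Nonempty (PathObject R z) := by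
  have := R.pullback_exists (R.isTerminal.from z) (R.isTerminal.from z) (R.all_fibrant z)
  have isProd : IsLimit (BinaryFan.mk (pullback.fst (R.isTerminal.from z) (R.isTerminal.from z))
      (pullback.snd _ _)) :=
    isProductOfIsTerminalIsPullback _ _ _ _ R.isTerminal (pullbackIsPullback _ _)
  obtain ⟨δ, hδ₀, hδ₁⟩ := BinaryFan.IsLimit.lift' isProd (𝟙 z) (𝟙 z)
  obtain ⟨P, σ, π, hσ, hπ, hσπ⟩ := R.factor δ
  exact ⟨⟨P, σ, π ≫ pullback.fst _ _, π ≫ pullback.snd _ _, hσ, by simpa [← hσπ] using hδ₀,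
    by simpa [← hσπ] using hδ₁, _, _, _, isProd, π, rfl, rfl, hπ⟩⟩

variable {R}

theorem Homotopic.refl {x y : T} (g : x ⟶ y) : Homotopic R g g :=
  let ⟨Po⟩ := R.nonempty_pathObject y
  ⟨Po, g ≫ Po.σ, by simp [Po.σ_π₀], by simp [Po.σ_π₁]⟩

theorem Anodyne.exists_retraction {x y : T} {f : x ⟶ y} (hf : Anodyne R.Fib f) :
    ∃ r : y ⟶ x, f ≫ r = 𝟙 x :=
  haveI := hf (R.isTerminal.from x) (R.all_fibrant x)
  let sq : CommSq (𝟙 x) f (R.isTerminal.from x) (R.isTerminal.from y) :=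
    ⟨R.isTerminal.hom_ext _ _⟩
  ⟨sq.lift, sq.fac_left⟩

theorem Anodyne.homotopic_of_comp_eq {x y z : T} {f : x ⟶ y} (hf : Anodyne R.Fib f)
    {g h : y ⟶ z} (hgh : f ≫ g = f ≫ h) : Homotopic R g h := by
  obtain ⟨Po⟩ := R.nonempty_pathObject z
  obtain ⟨b, hb₀, hb₁⟩ : ∃ b : y ⟶ Po.prod, b ≫ Po.p₀ = g ∧ b ≫ Po.p₁ = h :=
    ⟨_, (BinaryFan.IsLimit.lift' Po.isProd g h).2⟩
  have : HasLiftingProperty f Po.π := hf Po.π Po.π_fib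
  have sq : CommSq (f ≫ g ≫ Po.σ) f Po.π b := ⟨by
    apply BinaryFan.IsLimit.hom_ext Po.isProd
    · simp [Po.π_p₀, Po.σ_π₀, hb₀]
    · simp [Po.π_p₁, Po.σ_π₁, hb₁, hgh]⟩
  refine ⟨Po, sq.lift, ?_, ?_⟩
  · rw [← Po.π_p₀, ← Category.assoc, sq.fac_right, hb₀]
  · rw [← Po.π_p₁, ← Category.assoc, sq.fac_right, hb₁]

end Paper

open Paper in
/-- In a tribe, every anodyne morphism is a homotopy
equivalence; concretely, it admits a retraction `r` with `r ∘ f = id`, and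
`f ∘ r` is homotopic to the identity. -/
theorem anodyne_isHtpyEquiv {T : Type u} [Category.{v} T] (R : Paper.TribeStruct T)
    {x y : T} (f : x ⟶ y) (hf : Anodyne R.Fib f) :
    IsHtpyEquiv R f ∧ ∃ r : y ⟶ x, f ≫ r = 𝟙 x ∧ Homotopic R (r ≫ f) (𝟙 y) := by
  obtain ⟨r, hfr⟩ := hf.exists_retraction
  have hrf : Homotopic R (r ≫ f) (𝟙 y) := hf.homotopic_of_comp_eq (by simp [reassoc_of% hfr])
  exact ⟨⟨r, hfr ▸ Homotopic.refl _, hrf⟩, r, hfr, hrf⟩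
end

section
/- In a tribe, if f : x → y and g : y → z are morphisms such that g and g∘f are anodyne, then f is anodyne. -/
open CategoryTheory CategoryTheory.Limits

universe v u

open Paper in
/-- In a tribe, if `g` and `g ∘ f` are anodyne then so is `f`. -/
theorem anodyne_cancellation {T : Type u} [Category.{v} T] (R : Paper.TribeStruct T)
    {x y z : T} (f : x ⟶ y) (g : y ⟶ z)
    (hg : Anodyne R.Fib g) (hgf : Anodyne R.Fib (f ≫ g)) :
    Anodyne R.Fib f := by
  -- First obtain a retraction `r : z ⟶ y` of `g` by lifting against the
  -- fibration `y ⟶ term`.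
  have sq0 : CommSq (𝟙 y) g (R.isTerminal.from y) (R.isTerminal.from z) :=
    ⟨R.isTerminal.hom_ext _ _⟩
  haveI := hg (R.isTerminal.from y) (R.all_fibrant y)
  set r := sq0.lift with hrdef
  have hr : g ≫ r = 𝟙 y := sq0.fac_left
  intro u w p hp
  constructor
  intro a b sq
  haveI := hgf p hp
  have sq' : CommSq a (f ≫ g) p (r ≫ b) := by
    constructor
    rw [sq.w, Category.assoc, reassoc_of% hr]
  exact ⟨⟨⟨g ≫ sq'.lift, by rw [← Category.assoc]; exact sq'.fac_left,
    by rw [Category.assoc, sq'.fac_right, reassoc_of% hr]⟩⟩⟩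
end

section
/- Anodyne morphisms in a tribe are stable under pullback: given fibrations x₀ ↠ a, x₁ ↠ a, y₀ ↠ b, y₁ ↠ b, an anodyne morphism y₀ → y₁ over b, a morphism a → b, a morphism x₀ → x₁ over a, and compatible pullback squares exhibiting x₀ = a ×_b y₀ and x₁ = a ×_b y₁, the morphism x₀ → x₁ is anodyne. -/
/-!
Factor `σ = s ≫ t` with `s` anodyne and `t` a fibration, and pull `y₀ → y₁` back along `t` to
`z₀ → z₁` over `c`. Both comparison maps `xₑ → zₑ` are pullbacks of `s` along fibrations, and
`z₀ → z₁` is a pullback of `j` along a fibration, so all three are anodyne by (T4). Since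
`i ≫ (x₁ → z₁) = (x₀ → z₀) ≫ (z₀ → z₁)`, it remains to cancel an anodyne map on the right;
anodyne maps are split monomorphisms (lift against `x ↠ 1`), and `f` is a retract of `f ≫ g`
whenever `g` is a split monomorphism.
-/

open CategoryTheory CategoryTheory.Limits

universe v u

namespace Paper

variable {T : Type u} [Category.{v} T]

lemma anodyne_eq_llp (Fib : MorphismProperty T) : Anodyne Fib = Fib.llp := rfl

def retractArrowCompOfRetraction {A B C : T} (f : A ⟶ B) {g : B ⟶ C} {r : C ⟶ B}
    (hr : g ≫ r = 𝟙 B) : RetractArrow f (f ≫ g) where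
  i := Arrow.homMk (𝟙 A) g
  r := Arrow.homMk (𝟙 A) r (by simp [hr])
  retract := by ext <;> simp [hr]

lemma llp_of_comp_of_retraction (W : MorphismProperty T) {A B C : T} {f : A ⟶ B} {g : B ⟶ C}
    {r : C ⟶ B} (hr : g ≫ r = 𝟙 B) (hfg : W.llp (f ≫ g)) : W.llp f :=
  MorphismProperty.of_retract (retractArrowCompOfRetraction f hr) hfg

namespace TribeStruct

variable (R : TribeStruct T)

lemma exists_retraction_of_anodyne {x y : T} {f : x ⟶ y} (hf : Anodyne R.Fib f) :
    ∃ r : y ⟶ x, f ≫ r = 𝟙 x := by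
  have := hf (R.isTerminal.from x) (R.all_fibrant x)
  let sq : CommSq (𝟙 x) f (R.isTerminal.from x) (R.isTerminal.from y) :=
    ⟨R.isTerminal.hom_ext _ _⟩
  exact ⟨sq.lift, sq.fac_left⟩

lemma anodyne_of_anodyne_comp {x y z : T} {f : x ⟶ y} {g : y ⟶ z} (hg : Anodyne R.Fib g)
    (hfg : Anodyne R.Fib (f ≫ g)) : Anodyne R.Fib f :=
  let ⟨_, hr⟩ := R.exists_retraction_of_anodyne hg
  llp_of_comp_of_retraction R.Fib hr hfg

/-- With `x = a ×_b y` and `z = c ×_b y`, the comparison map `m` is the base change of `s` along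
the fibration `r`. -/
lemma anodyne_of_isPullback_comp {x a c b y z : T} {p : x ⟶ a} {u : x ⟶ y} {s : a ⟶ c}
    {t : c ⟶ b} {q : y ⟶ b} (sq : IsPullback p u (s ≫ t) q) {r : z ⟶ c} {w : z ⟶ y}
    (pb : IsPullback r w t q) (hs : Anodyne R.Fib s) (hq : R.Fib q) {m : x ⟶ z}
    (hmr : m ≫ r = p ≫ s) (hmw : m ≫ w = u) : Anodyne R.Fib m :=
  R.anodyne_stable (IsPullback.of_bot (by rwa [hmw]) hmr.symm pb) hs (R.fib_stable pb hq)

end TribeStruct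

end Paper

open Paper in
theorem anodyne_pullback_stable_general {T : Type u} [Category.{v} T] (R : Paper.TribeStruct T)
    {x₀ x₁ a y₀ y₁ b : T}
    (p₀ : x₀ ⟶ a) (p₁ : x₁ ⟶ a) (q₀ : y₀ ⟶ b) (q₁ : y₁ ⟶ b)
    (hq₀ : R.Fib q₀) (hq₁ : R.Fib q₁)
    (j : y₀ ⟶ y₁) (hj : Anodyne R.Fib j) (hjq : j ≫ q₁ = q₀)
    (σ : a ⟶ b) (i : x₀ ⟶ x₁) (hip : i ≫ p₁ = p₀)
    (u₀ : x₀ ⟶ y₀) (u₁ : x₁ ⟶ y₁)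
    (sq₀ : IsPullback p₀ u₀ σ q₀) (sq₁ : IsPullback p₁ u₁ σ q₁)
    (hcomm : i ≫ u₁ = u₀ ≫ j) :
    Anodyne R.Fib i := by
  obtain ⟨c, s, t, hs, ht, rfl⟩ := R.factor σ
  have := R.pullback_exists t q₀ hq₀
  have := R.pullback_exists t q₁ hq₁
  have pb₀ := IsPullback.of_hasPullback t q₀
  have pb₁ := IsPullback.of_hasPullback t q₁
  let m₀ := pullback.lift (p₀ ≫ s) u₀ (by simpa using sq₀.w)
  let m₁ := pullback.lift (p₁ ≫ s) u₁ (by simpa using sq₁.w)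
  let k := pullback.lift (pullback.fst t q₀) (pullback.snd t q₀ ≫ j)
    (by rw [Category.assoc, hjq, pullback.condition])
  have hm₀ : Anodyne R.Fib m₀ := R.anodyne_of_isPullback_comp sq₀ pb₀ hs hq₀
    (pullback.lift_fst _ _ _) (pullback.lift_snd _ _ _)
  have hm₁ : Anodyne R.Fib m₁ := R.anodyne_of_isPullback_comp sq₁ pb₁ hs hq₁
    (pullback.lift_fst _ _ _) (pullback.lift_snd _ _ _)
  have hk : Anodyne R.Fib k := R.anodyne_of_isPullback_comp (hjq ▸ pb₀.flip) pb₁.flip hj ht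
    (pullback.lift_snd _ _ _) (pullback.lift_fst _ _ _)
  have hsquare : i ≫ m₁ = m₀ ≫ k := by
    apply pb₁.hom_ext
    · simp only [m₀, m₁, k, Category.assoc, pullback.lift_fst, reassoc_of% hip]
    · simp only [m₀, m₁, k, Category.assoc, pullback.lift_snd, pullback.lift_snd_assoc, hcomm]
  refine R.anodyne_of_anodyne_comp hm₁ ?_
  rw [hsquare, anodyne_eq_llp]
  exact R.Fib.llp.comp_mem _ _ hm₀ hk

open Paper in
/-- Anodyne morphisms in a tribe are stable under pullback:
given fibrations `x₀ ↠ a`, `x₁ ↠ a`, `y₀ ↠ b`, `y₁ ↠ b`, an anodyne morphism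
`j : y₀ → y₁` over `b`, a morphism `σ : a → b`, a morphism `i : x₀ → x₁` over `a`
and compatible pullback squares exhibiting `x₀ = a ×_b y₀` and `x₁ = a ×_b y₁`,
the morphism `i` is anodyne. -/
theorem anodyne_pullback_stable {T : Type u} [Category.{v} T] (R : Paper.TribeStruct T)
    {x₀ x₁ a y₀ y₁ b : T}
    (p₀ : x₀ ⟶ a) (p₁ : x₁ ⟶ a) (q₀ : y₀ ⟶ b) (q₁ : y₁ ⟶ b)
    (hp₀ : R.Fib p₀) (hp₁ : R.Fib p₁) (hq₀ : R.Fib q₀) (hq₁ : R.Fib q₁)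
    (j : y₀ ⟶ y₁) (hj : Anodyne R.Fib j) (hjq : j ≫ q₁ = q₀)
    (σ : a ⟶ b) (i : x₀ ⟶ x₁) (hip : i ≫ p₁ = p₀)
    (u₀ : x₀ ⟶ y₀) (u₁ : x₁ ⟶ y₁)
    (sq₀ : IsPullback p₀ u₀ σ q₀) (sq₁ : IsPullback p₁ u₁ σ q₁)
    (hcomm : i ≫ u₁ = u₀ ≫ j) :
    Anodyne R.Fib i :=
  anodyne_pullback_stable_general R p₀ p₁ q₀ q₁ hq₀ hq₁ j hj hjq σ i hip u₀ u₁ sq₀ sq₁ hcomm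
end

section
/- Gluing lemma for anodyne morphisms: in a tribe, given a cube whose front and back faces are pullback squares along fibrations x₁ ↠ x₀₁ and y₁ ↠ y₀₁, if the three comparison morphisms x₀ → y₀, x₁ → y₁ and x₀₁ → y₀₁ are anodyne, then so is the induced morphism x_∅ → y_∅ on pullbacks. -/
open CategoryTheory CategoryTheory.Limits

universe v u

namespace Paper

variable {T : Type u} [Category.{v} T]

section Aux

variable {T : Type u} [Category.{v} T]

/-- Anodyne morphisms are closed under composition. -/
lemma anodyne_comp (R : TribeStruct T) {a b c : T} {f : a ⟶ b} {g : b ⟶ c}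
    (hf : Anodyne R.Fib f) (hg : Anodyne R.Fib g) : Anodyne R.Fib (f ≫ g) := by
  intro u w q hq
  haveI := hf q hq
  haveI := hg q hq
  infer_instance

/-- A retract of an anodyne morphism is anodyne. -/
lemma anodyne_of_retract (R : TribeStruct T) {A B E : T} {u : A ⟶ B} {i : A ⟶ E} {p : E ⟶ B}
    {s : B ⟶ E} (hi : Anodyne R.Fib i) (h1 : i ≫ p = u) (h2 : u ≫ s = i) (h3 : s ≫ p = 𝟙 B) :
    Anodyne R.Fib u := by
  intro X Y g hg
  haveI := hi g hg
  constructor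
  intro f b sq
  have sq2 : CommSq f i g (p ≫ b) := ⟨by rw [sq.w, ← h1, Category.assoc]⟩
  exact CommSq.HasLift.mk'
    { l := s ≫ sq2.lift
      fac_left := by rw [← Category.assoc, h2, sq2.fac_left]
      fac_right := by
        rw [Category.assoc, sq2.fac_right, ← Category.assoc, h3, Category.id_comp] }

/-- Left cancellation: if `v` and `u ≫ v` are anodyne, then `u` is anodyne. -/
lemma anodyne_cancel (R : TribeStruct T) {A B C : T} {u : A ⟶ B} {v : B ⟶ C}
    (hv : Anodyne R.Fib v) (huv : Anodyne R.Fib (u ≫ v)) : Anodyne R.Fib u := by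
  obtain ⟨E, i, p, hi, hp, hip⟩ := R.factor u
  -- a retraction of `v`, using that all objects are fibrant
  haveI := hv _ (R.all_fibrant B)
  have sqr : CommSq (𝟙 B) v (R.isTerminal.from B) (R.isTerminal.from C) :=
    ⟨R.isTerminal.hom_ext _ _⟩
  -- lift of `u ≫ v` against the fibration `p`
  haveI := huv p hp
  have sqM : CommSq i (u ≫ v) p sqr.lift :=
    ⟨by rw [hip, Category.assoc, sqr.fac_left, Category.comp_id]⟩
  refine anodyne_of_retract R (s := v ≫ sqM.lift) hi hip ?_ ?_
  · rw [← Category.assoc]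
    exact sqM.fac_left
  · rw [Category.assoc, sqM.fac_right, sqr.fac_left]

/-- The gluing lemma in the special case where the comparison edge
`G' : Y₀ ⟶ Y01` of the front face is a fibration. -/
lemma anodyne_gluing_aux (R : TribeStruct T)
    {Xe X₀ X₁ X01 Ye Y₀ Y₁ Y01 : T}
    (P : X₁ ⟶ X01) (hP : R.Fib P) (G : X₀ ⟶ X01)
    (P' : Y₁ ⟶ Y01) (hP' : R.Fib P') (G' : Y₀ ⟶ Y01) (hG' : R.Fib G')
    (Xfst : Xe ⟶ X₀) (Xsnd : Xe ⟶ X₁) (hX : IsPullback Xfst Xsnd G P)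
    (Yfst : Ye ⟶ Y₀) (Ysnd : Ye ⟶ Y₁) (hY : IsPullback Yfst Ysnd G' P')
    (A₀ : X₀ ⟶ Y₀) (A₁ : X₁ ⟶ Y₁) (A01 : X01 ⟶ Y01) (Ae : Xe ⟶ Ye)
    (hA₀ : Anodyne R.Fib A₀) (hA₁ : Anodyne R.Fib A₁) (hA01 : Anodyne R.Fib A01)
    (hsq₁ : A₁ ≫ P' = P ≫ A01) (hsq₀ : A₀ ≫ G' = G ≫ A01)
    (hfst : Ae ≫ Yfst = Xfst ≫ A₀) (hsnd : Ae ≫ Ysnd = Xsnd ≫ A₁) :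
    Anodyne R.Fib Ae := by
  -- Z := X01 ×_{Y01} Y₀
  haveI : HasPullback A01 G' := R.pullback_exists A01 G' hG'
  have hZ : IsPullback (pullback.fst A01 G') (pullback.snd A01 G') A01 G' :=
    IsPullback.of_hasPullback A01 G'
  have hzs : Anodyne R.Fib (pullback.snd A01 G') := R.anodyne_stable hZ hA01 hG'
  -- the induced map A₀' : X₀ ⟶ Z is anodyne by cancellation
  have w₀ : G ≫ A01 = A₀ ≫ G' := hsq₀.symm
  have hA₀' : Anodyne R.Fib (pullback.lift G A₀ w₀) := by
    refine anodyne_cancel R hzs ?_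
    rw [pullback.lift_snd]
    exact hA₀
  -- V := X₁ ×_{Y₁} Ye
  have hYsnd : R.Fib Ysnd := R.fib_stable hY.flip hG'
  haveI : HasPullback A₁ Ysnd := R.pullback_exists A₁ Ysnd hYsnd
  have hV : IsPullback (pullback.fst A₁ Ysnd) (pullback.snd A₁ Ysnd) A₁ Ysnd :=
    IsPullback.of_hasPullback A₁ Ysnd
  have hvs : Anodyne R.Fib (pullback.snd A₁ Ysnd) := R.anodyne_stable hV hA₁ hYsnd
  -- the comparison map t : V ⟶ Z
  have wt : (pullback.fst A₁ Ysnd ≫ P) ≫ A01 = (pullback.snd A₁ Ysnd ≫ Yfst) ≫ G' := by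
    rw [Category.assoc, ← hsq₁, ← Category.assoc, hV.w, Category.assoc, ← hY.w,
      ← Category.assoc]
  set t : pullback A₁ Ysnd ⟶ pullback A01 G' :=
    pullback.lift (pullback.fst A₁ Ysnd ≫ P) (pullback.snd A₁ Ysnd ≫ Yfst) wt with ht_def
  have ht_f : t ≫ pullback.fst A01 G' = pullback.fst A₁ Ysnd ≫ P := pullback.lift_fst _ _ _
  have ht_s : t ≫ pullback.snd A01 G' = pullback.snd A₁ Ysnd ≫ Yfst := pullback.lift_snd _ _ _
  -- V is the pullback of Z along P
  have R1 : IsPullback (pullback.fst A₁ Ysnd) (pullback.snd A₁ Ysnd ≫ Yfst) (A₁ ≫ P') G' :=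
    hV.paste_vert hY.flip
  have R1' : IsPullback (pullback.fst A₁ Ysnd) (t ≫ pullback.snd A01 G') (P ≫ A01) G' := by
    rw [ht_s, ← hsq₁]
    exact R1
  have hS1 : IsPullback (pullback.fst A₁ Ysnd) t P (pullback.fst A01 G') :=
    R1'.of_bot ht_f.symm hZ
  have hFt : R.Fib t := R.fib_stable hS1.flip hP
  -- the induced map m : Xe ⟶ V
  set m : Xe ⟶ pullback A₁ Ysnd := pullback.lift Xsnd Ae hsnd.symm with hm_def
  have hm_vf : m ≫ pullback.fst A₁ Ysnd = Xsnd := pullback.lift_fst _ _ _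
  have hm_vs : m ≫ pullback.snd A₁ Ysnd = Ae := pullback.lift_snd _ _ _
  -- Xe is the pullback of V along A₀'
  have pcomm : Xfst ≫ pullback.lift G A₀ w₀ = m ≫ t := by
    apply pullback.hom_ext
    · rw [Category.assoc, Category.assoc, pullback.lift_fst, ht_f, ← Category.assoc, hm_vf]
      exact hX.w
    · rw [Category.assoc, Category.assoc, pullback.lift_snd, ht_s, ← Category.assoc, hm_vs]
      exact hfst.symm
  have big : IsPullback Xfst (m ≫ pullback.fst A₁ Ysnd) (pullback.lift G A₀ w₀ ≫
      pullback.fst A01 G') P := by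
    rw [hm_vf, pullback.lift_fst]
    exact hX
  have hU : IsPullback Xfst m (pullback.lift G A₀ w₀) t := big.of_bot pcomm hS1.flip
  have hm : Anodyne R.Fib m := R.anodyne_stable hU hA₀' hFt
  have := anodyne_comp R hm hvs
  rwa [hm_vs] at this

end Aux

end Paper

open Paper in
/-- Gluing lemma for anodyne morphisms: given a cube in a tribe
whose front and back faces are pullback squares along fibrations
`x₁ ↠ x₀₁` and `y₁ ↠ y₀₁`, if the comparison morphisms `x₀ → y₀`, `x₁ → y₁`
and `x₀₁ → y₀₁` are anodyne, then so is the induced morphism `x_∅ → y_∅`. -/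
theorem anodyne_gluing {T : Type u} [Category.{v} T] (R : Paper.TribeStruct T)
    {xe x₀ x₁ x01 ye y₀ y₁ y01 : T}
    (px : x₁ ⟶ x01) (hpx : R.Fib px) (gx : x₀ ⟶ x01)
    (py : y₁ ⟶ y01) (hpy : R.Fib py) (gy : y₀ ⟶ y01)
    (xfst : xe ⟶ x₀) (xsnd : xe ⟶ x₁) (hxe : IsPullback xfst xsnd gx px)
    (yfst : ye ⟶ y₀) (ysnd : ye ⟶ y₁) (hye : IsPullback yfst ysnd gy py)
    (a₀ : x₀ ⟶ y₀) (a₁ : x₁ ⟶ y₁) (a01 : x01 ⟶ y01) (ae : xe ⟶ ye)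
    (ha₀ : Anodyne R.Fib a₀) (ha₁ : Anodyne R.Fib a₁) (ha01 : Anodyne R.Fib a01)
    (hsq₁ : a₁ ≫ py = px ≫ a01) (hsq₀ : a₀ ≫ gy = gx ≫ a01)
    (hfst : ae ≫ yfst = xfst ≫ a₀) (hsnd : ae ≫ ysnd = xsnd ≫ a₁) :
    Anodyne R.Fib ae := by
  -- factor `gy` as an anodyne map followed by a fibration
  obtain ⟨d, k, r', hk, hr', hkr⟩ := R.factor gy
  haveI : HasPullback r' py := R.pullback_exists r' py hpy
  have hD : IsPullback (pullback.fst r' py) (pullback.snd r' py) r' py :=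
    IsPullback.of_hasPullback r' py
  have hdf : R.Fib (pullback.fst r' py) := R.fib_stable hD hpy
  -- the comparison map be : ye ⟶ de is anodyne, being a pullback of `k`
  have wbe : (yfst ≫ k) ≫ r' = ysnd ≫ py := by rw [Category.assoc, hkr, hye.w]
  set be : ye ⟶ pullback r' py := pullback.lift (yfst ≫ k) ysnd wbe with hbe_def
  have hbe_f : be ≫ pullback.fst r' py = yfst ≫ k := pullback.lift_fst _ _ _
  have hbe_s : be ≫ pullback.snd r' py = ysnd := pullback.lift_snd _ _ _
  have hbeP : IsPullback yfst be k (pullback.fst r' py) := by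
    refine IsPullback.of_bot ?_ hbe_f.symm hD
    rw [hbe_s, hkr]
    exact hye
  have hbe : Anodyne R.Fib be := R.anodyne_stable hbeP hk hdf
  -- apply the special case of the gluing lemma to the cube over the replaced front face
  have haux : Anodyne R.Fib (ae ≫ be) := by
    refine anodyne_gluing_aux R px hpx gx py hpy r' hr'
      xfst xsnd hxe (pullback.fst r' py) (pullback.snd r' py) hD
      (a₀ ≫ k) a₁ a01 (ae ≫ be) (anodyne_comp R ha₀ hk) ha₁ ha01
      hsq₁ ?_ ?_ ?_
    · rw [Category.assoc, hkr]
      exact hsq₀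
    · rw [Category.assoc, hbe_f, ← Category.assoc, hfst, Category.assoc]
    · rw [Category.assoc, hbe_s]
      exact hsnd
  exact anodyne_cancel R hbe haux
end

section
/- Every acyclic fibration in a tribe admits a section; consequently, every object in a tribe is cofibrant (has the left lifting property against acyclic fibrations). -/
open CategoryTheory CategoryTheory.Limits

universe v u

/-!
If `g` is a homotopy inverse of the fibration `p : x ⟶ y`, then `g ≫ p` is homotopic to `𝟙 y`
and lifts through `p` (to `g`). Fibrations have the homotopy lifting property: for a path object
`P` of `y`, the map `x ⟶ P ×_y x` sending a point to the constant path at its image is a pullback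
of the anodyne `σ : y ⟶ P` along a fibration, hence anodyne, and lifting against it transports
lifts along paths. So `𝟙 y` lifts through `p`, and a section of `p` lifts every map into `y`.
-/

namespace CategoryTheory.IsPullback

variable {C : Type*} [Category C] {E P X Y : C} {fst : E ⟶ P} {snd : E ⟶ X} {f : P ⟶ Y}
  {p : X ⟶ Y}

theorem of_comp_eq_id (t : IsPullback fst snd f p) {σ : Y ⟶ P} (hσ : σ ≫ f = 𝟙 Y)
    {j : X ⟶ E} (hj : j ≫ fst = p ≫ σ) (hj' : j ≫ snd = 𝟙 X) :
    IsPullback p j σ fst :=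
  of_bot (by rw [hj', hσ]; exact id_vert p) hj.symm t

end CategoryTheory.IsPullback

namespace Paper

variable {T : Type u} [Category.{v} T] {R : TribeStruct T}

theorem PathObject.anodyne_of_isPullback {x y E : T} {p : x ⟶ y} (hp : R.Fib p)
    (Po : PathObject R y) {fst : E ⟶ Po.P} {snd : E ⟶ x} (t : IsPullback fst snd Po.π₀ p)
    {j : x ⟶ E} (hj : j ≫ fst = p ≫ Po.σ) (hj' : j ≫ snd = 𝟙 x) :
    Anodyne R.Fib j :=
  R.anodyne_stable (t.of_comp_eq_id Po.σ_π₀ hj hj') Po.σ_anodyne (R.fib_stable t hp)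

theorem exists_lift_of_homotopic {a x y : T} {p : x ⟶ y} (hp : R.Fib p) {f₀ f₁ : a ⟶ y}
    (h : Homotopic R f₀ f₁) {u : a ⟶ x} (hu : u ≫ p = f₀) :
    ∃ v : a ⟶ x, v ≫ p = f₁ := by
  obtain ⟨Po, H, hH₀, hH₁⟩ := h
  have := R.pullback_exists Po.π₀ p hp
  have t := IsPullback.of_hasPullback Po.π₀ p
  let j : x ⟶ pullback Po.π₀ p := t.lift (p ≫ Po.σ) (𝟙 x) (by simp [Po.σ_π₀])
  have hj : Anodyne R.Fib j := Po.anodyne_of_isPullback hp t (t.lift_fst _ _ _) (t.lift_snd _ _ _)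
  have sq : CommSq (𝟙 x) j p (pullback.fst Po.π₀ p ≫ Po.π₁) :=
    ⟨by simp [j, Po.σ_π₁]⟩
  have := hj p hp
  refine ⟨t.lift H u (by rw [hH₀, hu]) ≫ sq.lift, ?_⟩
  simp [hH₁]

theorem exists_section_of_fib_of_isHtpyEquiv {x y : T} {p : x ⟶ y} (hp : R.Fib p)
    (he : IsHtpyEquiv R p) : ∃ s : y ⟶ x, s ≫ p = 𝟙 y :=
  have ⟨_, _, h⟩ := he
  exists_lift_of_homotopic hp h rfl

end Paper

open Paper in
/-- Every acyclic fibration in a tribe admits a section;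
consequently, every object of a tribe is cofibrant. -/
theorem acyclic_fib_section_and_cofibrant {T : Type u} [Category.{v} T]
    (R : Paper.TribeStruct T) :
    (∀ {x y : T} (p : x ⟶ y), R.Fib p → IsHtpyEquiv R p →
      ∃ s : y ⟶ x, s ≫ p = 𝟙 y) ∧
    (∀ (a : T) {x y : T} (p : x ⟶ y), R.Fib p → IsHtpyEquiv R p →
      ∀ f : a ⟶ y, ∃ g : a ⟶ x, g ≫ p = f) := by
  refine ⟨fun p hp he => exists_section_of_fib_of_isHtpyEquiv hp he, fun a _ _ p hp he f => ?_⟩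
  obtain ⟨s, hs⟩ := exists_section_of_fib_of_isHtpyEquiv hp he
  exact ⟨f ≫ s, by rw [Category.assoc, hs, Category.comp_id]⟩
end

section
/- In the hammock localization of a tribe, every zig-zag of morphisms is homotopic to a single morphism of the tribe: any right fraction x ← x' → y with left leg a weak equivalence is connected by a homotopy (in the mapping space of the hammock localization) to a single morphism x → y of the tribe. -/
open CategoryTheory CategoryTheory.Limits

universe v u

namespace Paper

variable {C : Type u} [Category.{v} C]

/-- A right fraction from `x` to `y` with respect to a class `W` of weak
equivalences:  a diagram `x ⟵ obj ⟶ y` whose left leg lies in `W`. -/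
structure Frac (W : MorphismProperty C) (x y : C) where
  obj : C
  v : obj ⟶ x
  s : obj ⟶ y
  hv : W v

/-- Morphisms of fractions: morphisms of the middle objects commuting with
both legs. -/
instance Frac.category (W : MorphismProperty C) (x y : C) : Category (Frac W x y) where
  Hom A B := { f : A.obj ⟶ B.obj // f ≫ B.v = A.v ∧ f ≫ B.s = A.s }
  id A := ⟨𝟙 A.obj, by simp, by simp⟩
  comp f g := ⟨f.1 ≫ g.1, by rw [Category.assoc, g.2.1, f.2.1],
    by rw [Category.assoc, g.2.2, f.2.2]⟩
  id_comp f := Subtype.ext (Category.id_comp _)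
  comp_id f := Subtype.ext (Category.comp_id _)
  assoc f g h := Subtype.ext (Category.assoc _ _ _)

end Paper


/-!
A weak equivalence `v : x' ⟶ x` has a homotopy inverse `w`, and a homotopy `H : x' ⟶ P x'`
from `v ≫ w` to `𝟙` is a morphism of fractions from `(v, v ≫ w ≫ s)` to `(π₁ ≫ v, π₀ ≫ s)`,
which also receives one from `(v, s)`, namely the reflexivity `σ`. The fraction
`(v, v ≫ w ≫ s)` in turn maps, via `v`, to `(𝟙, w ≫ s)`. The only homotopical input is that
`π₁ ≫ v` is again a weak equivalence; this comes from extending homotopies along the anodyne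
map `σ`.
-/

namespace Paper

variable {T : Type u} [Category.{v} T] (R : TribeStruct T)

lemma exists_pathObject (x : T) : Nonempty (PathObject R x) := by
  let t := R.isTerminal.from x
  have : HasPullback t t := R.pullback_exists t t (R.all_fibrant x)
  obtain ⟨P, i, q, hi, hq, hiq⟩ := R.factor (pullback.lift (𝟙 x) (𝟙 x) rfl : x ⟶ pullback t t)
  exact ⟨{ P, σ := i, π₀ := q ≫ pullback.fst t t, π₁ := q ≫ pullback.snd t t
           σ_anodyne := hi
           σ_π₀ := by rw [reassoc_of% hiq, pullback.lift_fst]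
           σ_π₁ := by rw [reassoc_of% hiq, pullback.lift_snd]
           prod := pullback t t, p₀ := pullback.fst t t, p₁ := pullback.snd t t
           isProd := isProductOfIsTerminalIsPullback t t _ _ R.isTerminal (pullbackIsPullback t t)
           π := q, π_p₀ := rfl, π_p₁ := rfl, π_fib := hq }⟩

variable {R}

namespace Homotopic

lemma refl_s12 {x y : T} (f : x ⟶ y) : Homotopic R f f := by
  obtain ⟨Po⟩ := exists_pathObject R y
  exact ⟨Po, f ≫ Po.σ, by simp [Po.σ_π₀], by simp [Po.σ_π₁]⟩

lemma comp_left {w x y : T} (u : w ⟶ x) {f g : x ⟶ y} (h : Homotopic R f g) :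
    Homotopic R (u ≫ f) (u ≫ g) := by
  obtain ⟨Po, H, hH₀, hH₁⟩ := h
  exact ⟨Po, u ≫ H, by simp [hH₀], by simp [hH₁]⟩

/-- Homotopy extension: homotopies extend along anodyne maps, since these lift against the
fibration `P c ⟶ c × c`. -/
lemma of_anodyne_comp {a b c : T} {i : a ⟶ b} (hi : Anodyne R.Fib i) {k₀ k₁ : b ⟶ c}
    (h : Homotopic R (i ≫ k₀) (i ≫ k₁)) : Homotopic R k₀ k₁ := by
  obtain ⟨Po, H, hH₀, hH₁⟩ := h
  obtain ⟨m, hm₀, hm₁⟩ : ∃ m : b ⟶ Po.prod, m ≫ Po.p₀ = k₀ ∧ m ≫ Po.p₁ = k₁ :=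
    ⟨_, BinaryFan.IsLimit.lift_fst Po.isProd k₀ k₁, BinaryFan.IsLimit.lift_snd Po.isProd k₀ k₁⟩
  have sq : CommSq H i Po.π m := ⟨BinaryFan.IsLimit.hom_ext Po.isProd
    (by simp [Po.π_p₀, hm₀, hH₀]) (by simp [Po.π_p₁, hm₁, hH₁])⟩
  have := hi Po.π Po.π_fib
  exact ⟨Po, sq.lift, by rw [← Po.π_p₀, sq.fac_right_assoc, hm₀],
    by rw [← Po.π_p₁, sq.fac_right_assoc, hm₁]⟩

lemma comp_right {x y z : T} {f g : x ⟶ y} (h : Homotopic R f g) (u : y ⟶ z) :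
    Homotopic R (f ≫ u) (g ≫ u) := by
  obtain ⟨Po, H, rfl, rfl⟩ := h
  have hext : Homotopic R (Po.π₀ ≫ u) (Po.π₁ ≫ u) :=
    of_anodyne_comp Po.σ_anodyne <| by
      simpa [reassoc_of% Po.σ_π₀, reassoc_of% Po.σ_π₁] using refl_s12 (R := R) u
  simpa using hext.comp_left H

end Homotopic

lemma isHtpyEquiv_id (x : T) : IsHtpyEquiv R (𝟙 x) :=
  ⟨𝟙 x, by simpa using Homotopic.refl_s12 (𝟙 x), by simpa using Homotopic.refl_s12 (𝟙 x)⟩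

/-- For a homotopy inverse `w` of `v`, the inverse is `w ≫ σ`; the homotopy
`π₁ ≫ v ≫ w ≫ σ ∼ 𝟙` is extended along `σ` from `v ≫ w ≫ σ ∼ σ`. -/
lemma PathObject.isHtpyEquiv_π₁_comp {a b : T} (Po : PathObject R a) {v : a ⟶ b}
    (hv : IsHtpyEquiv R v) : IsHtpyEquiv R (Po.π₁ ≫ v) := by
  obtain ⟨w, hvw, hwv⟩ := hv
  refine ⟨w ≫ Po.σ, Homotopic.of_anodyne_comp Po.σ_anodyne ?_, ?_⟩
  · simpa [reassoc_of% Po.σ_π₁] using hvw.comp_right Po.σ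
  · simpa [reassoc_of% Po.σ_π₁] using hwv

end Paper

open Paper in
/-- In (the hammock localization of) a tribe, every zig-zag is
homotopic to a single morphism of the tribe: every right fraction
`x ⟵ x' ⟶ y` whose left leg is a weak equivalence is connected, in the category
of right fractions from `x` to `y` (whose nerve computes the mapping space of
the hammock localization), by a zig-zag of morphisms of fractions to the
fraction `x ⟵ x ⟶ y` given by the identity and a single morphism `f : x ⟶ y`. -/
theorem tribe_fraction_homotopic_to_single_morphism
    {T : Type u} [Category.{v} T] (R : Paper.TribeStruct T) {x y : T}
    (A : Frac (hW R) x y) :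
    ∃ (f : x ⟶ y) (hid : IsHtpyEquiv R (𝟙 x)),
      Zigzag A (Frac.mk x (𝟙 x) f hid) := by
  obtain ⟨w, ⟨Po, H, hH₀, hH₁⟩, -⟩ := A.hv
  let Q : Frac (hW R) x y := ⟨Po.P, Po.π₁ ≫ A.v, Po.π₀ ≫ A.s, Po.isHtpyEquiv_π₁_comp A.hv⟩
  let M : Frac (hW R) x y := ⟨A.obj, A.v, A.v ≫ w ≫ A.s, A.hv⟩
  let B : Frac (hW R) x y := ⟨x, 𝟙 x, w ≫ A.s, isHtpyEquiv_id x⟩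
  let σ : A ⟶ Q := ⟨Po.σ, by simp [Q, reassoc_of% Po.σ_π₁], by simp [Q, reassoc_of% Po.σ_π₀]⟩
  let H' : M ⟶ Q := ⟨H, by simp [Q, M, reassoc_of% hH₁], by simp [Q, M, reassoc_of% hH₀]⟩
  let v : M ⟶ B := ⟨A.v, by simp [M, B], rfl⟩
  exact ⟨w ≫ A.s, isHtpyEquiv_id x, (Zigzag.of_hom_inv σ H').trans (Zigzag.of_hom v)⟩
end

section
/- Every tribe T gives rise to a categorical model of type theory: taking T^{[1]}_f to be the full subcategory of the arrow category T^{[1]} spanned by fibrations, with p = cod and χ the inclusion, the triple (T, T^{[1]}_f, χ) is a comprehension category with strong Σ-types and weakly stable Id-types in which all objects are fibrant. -/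
open CategoryTheory CategoryTheory.Limits

universe v u

namespace Paper

universe u₂

variable {Ctx : Type u} [Category.{v} Ctx] {Ty : Type u₂} [Category.{v} Ty]

/-- `φ` is a `p`-cartesian morphism. -/
def IsCartesianAt (p : Ty ⥤ Ctx) {X Y : Ty} (φ : X ⟶ Y) : Prop :=
  ∀ (Z : Ty) (ψ : Z ⟶ Y) (g : p.obj Z ⟶ p.obj X), g ≫ p.map φ = p.map ψ →
    ∃! l : Z ⟶ X, l ≫ φ = ψ ∧ p.map l = g

/-- Fibrations of a comprehension category: morphisms isomorphic to finite
composites of comprehension maps. -/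
inductive CompFib (p : Ty ⥤ Ctx) (χ : Ty ⥤ Arrow Ctx) :
    ∀ {x y : Ctx}, (x ⟶ y) → Prop
  | basic (A : Ty) : CompFib p χ (χ.obj A).hom
  | id (x : Ctx) : CompFib p χ (𝟙 x)
  | comp {x y z : Ctx} (f : x ⟶ y) (g : y ⟶ z) :
      CompFib p χ f → CompFib p χ g → CompFib p χ (f ≫ g)
  | iso {x y x' y' : Ctx} (f : x ⟶ y) (g : x' ⟶ y') (e₁ : x ≅ x') (e₂ : y ≅ y')
      (h : e₁.hom ≫ g = f ≫ e₂.hom) : CompFib p χ f → CompFib p χ g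

/-- The fibrations of a comprehension category as a morphism property. -/
def compFibProp (p : Ty ⥤ Ctx) (χ : Ty ⥤ Arrow Ctx) : MorphismProperty Ctx :=
  fun _ _ f => CompFib p χ f

/-- `r : u ⟶ w` (between objects over `Γ`) is stably anodyne over `Γ` if it is
anodyne and all of its pullbacks along morphisms `Δ ⟶ Γ` are anodyne. -/
def StablyAnodyneOver (Fib : MorphismProperty Ctx) {Γ u w : Ctx}
    (pu : u ⟶ Γ) (pw : w ⟶ Γ) (r : u ⟶ w) : Prop :=
  Anodyne Fib r ∧
  ∀ {Δ u' w' : Ctx} (σ : Δ ⟶ Γ) (fu : u' ⟶ u) (pu' : u' ⟶ Δ)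
    (fw : w' ⟶ w) (pw' : w' ⟶ Δ) (r' : u' ⟶ w'),
    IsPullback fu pu' pu σ → IsPullback fw pw' pw σ →
    r' ≫ fw = fu ≫ r → r' ≫ pw' = pu' → Anodyne Fib r'

/-- A categorical model of Martin-Löf type theory with `Σ`- and `Id`-types:
a comprehension category in which all objects are fibrant, with strong
`Σ`-types (with η, i.e. given by composition of comprehensions up to
isomorphism) and weakly stable `Id`-types (encoded by stably anodyne/fibration
factorizations of relative diagonals of fibrations). -/
structure CategoricalModel (p : Ty ⥤ Ctx) (χ : Ty ⥤ Arrow Ctx) where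
  term : Ctx
  isTerminal : Limits.IsTerminal term
  /-- the comprehension functor lives over `p` via the codomain functor -/
  isOver : ∀ A : Ty, (χ.obj A).right = p.obj A
  /-- `χ` is full -/
  full : ∀ {A B : Ty} (f : χ.obj A ⟶ χ.obj B), ∃ g : A ⟶ B, χ.map g = f
  /-- `χ` is faithful -/
  faithful : ∀ {A B : Ty} (f g : A ⟶ B), χ.map f = χ.map g → f = g
  /-- `p` is a Grothendieck fibration -/
  grothendieck : ∀ (A : Ty) {x : Ctx} (f : x ⟶ p.obj A),
    ∃ (B : Ty) (φ : B ⟶ A) (hB : p.obj B = x),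
      IsCartesianAt p φ ∧ p.map φ = eqToHom hB ≫ f
  /-- `χ` sends cartesian morphisms to pullback squares -/
  cart_pullback : ∀ {A B : Ty} (φ : A ⟶ B), IsCartesianAt p φ →
    IsPullback (χ.map φ).left (χ.obj A).hom (χ.obj B).hom (χ.map φ).right
  /-- all objects are fibrant -/
  all_fibrant : ∀ Γ : Ctx, CompFib p χ (isTerminal.from Γ)
  /-- strong `Σ`-types with η -/
  sigma : ∀ (A B : Ty) (h : (χ.obj B).right = (χ.obj A).left),
    ∃ (S : Ty) (_ : (χ.obj S).right = (χ.obj A).right),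
      Nonempty ((χ.obj S) ≅ Arrow.mk ((χ.obj B).hom ≫ eqToHom h ≫ (χ.obj A).hom))
  /-- `Id`-types: the object of the factorization of the relative diagonal -/
  idI : ∀ {x y P : Ctx} (q : x ⟶ y), CompFib p χ q →
    ∀ (p₁ p₂ : P ⟶ x), IsPullback p₁ p₂ q q → Ctx
  /-- reflexivity -/
  idr : ∀ {x y P : Ctx} (q : x ⟶ y) (hq : CompFib p χ q)
    (p₁ p₂ : P ⟶ x) (hP : IsPullback p₁ p₂ q q), x ⟶ idI q hq p₁ p₂ hP
  /-- the `Id`-fibration -/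
  idπ : ∀ {x y P : Ctx} (q : x ⟶ y) (hq : CompFib p χ q)
    (p₁ p₂ : P ⟶ x) (hP : IsPullback p₁ p₂ q q), idI q hq p₁ p₂ hP ⟶ P
  /-- the factorization of the relative diagonal -/
  id_fac : ∀ {x y P : Ctx} (q : x ⟶ y) (hq : CompFib p χ q)
    (p₁ p₂ : P ⟶ x) (hP : IsPullback p₁ p₂ q q),
    idr q hq p₁ p₂ hP ≫ idπ q hq p₁ p₂ hP = hP.lift (𝟙 x) (𝟙 x) (by simp)
  idπ_fib : ∀ {x y P : Ctx} (q : x ⟶ y) (hq : CompFib p χ q)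
    (p₁ p₂ : P ⟶ x) (hP : IsPullback p₁ p₂ q q),
    CompFib p χ (idπ q hq p₁ p₂ hP)
  /-- weak stability: reflexivity maps are stably anodyne -/
  idr_stable : ∀ {x y P : Ctx} (q : x ⟶ y) (hq : CompFib p χ q)
    (p₁ p₂ : P ⟶ x) (hP : IsPullback p₁ p₂ q q),
    StablyAnodyneOver (compFibProp p χ) q (idπ q hq p₁ p₂ hP ≫ p₁ ≫ q)
      (idr q hq p₁ p₂ hP)

end Paper

/-!
The comprehension-category structure is formal: for `p = cod`, the cartesian morphisms between
fibrations are exactly the pullback squares, `Σ`-types are composites of fibrations, and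
`Id`-types are (T3)-factorizations of relative diagonals. The content is weak stability: an
anodyne map `r : u ⟶ w` between fibrations over `Γ` stays anodyne after pullback along an
arbitrary `σ : Δ ⟶ Γ`, whereas (T4) only allows pulling back along fibrations. Factor
`σ = j ≫ t` with `j` anodyne and `t` a fibration. Over `t`, the pullback of `r` is anodyne by
(T4). The comparison maps from the pullbacks along `σ` to those along `t` are pullbacks of `j`
along fibrations, hence anodyne by (T4) again; the one for `w` has a retraction because `j` does
(its domain being fibrant). So the pullback of `r` along `σ` is a retract of a composite of
anodyne maps.
-/

namespace Paper

section Anodyne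

variable {T : Type u} [Category.{v} T] {F : MorphismProperty T}

lemma Anodyne.comp {x y z : T} {f : x ⟶ y} {g : y ⟶ z} (hf : Anodyne F f)
    (hg : Anodyne F g) : Anodyne F (f ≫ g) :=
  F.llp.comp_mem f g hf hg

lemma Anodyne.exists_retraction_s19 {x y z : T} {i : x ⟶ y} (hi : Anodyne F i) {g : x ⟶ z}
    (hg : F g) (k : y ⟶ z) (hk : i ≫ k = g) : ∃ ρ : y ⟶ x, i ≫ ρ = 𝟙 x := by
  have := hi g hg
  have sq : CommSq (𝟙 x) i g k := ⟨by rw [Category.id_comp, hk]⟩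
  exact ⟨sq.lift, sq.fac_left⟩

lemma Anodyne.of_comp_of_retraction {x y z : T} {r : x ⟶ y} {m : y ⟶ z} {ρ : z ⟶ y}
    (hρ : m ≫ ρ = 𝟙 y) (h : Anodyne F (r ≫ m)) : Anodyne F r :=
  F.llp.of_retract (f := r) (g := r ≫ m)
    { i := Arrow.homMk (𝟙 x) m, r := Arrow.homMk (𝟙 x) ρ (by simp [hρ]) } h

end Anodyne

lemma compFibProp_le {Ctx : Type u} [Category.{v} Ctx] {Ty : Type*} [Category.{v} Ty]
    {p : Ty ⥤ Ctx} {χ : Ty ⥤ Arrow Ctx} {F : MorphismProperty Ctx} [F.IsMultiplicative]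
    [F.RespectsIso] (hχ : ∀ A, F (χ.obj A).hom) : compFibProp p χ ≤ F := fun _ _ _ hf => by
  induction hf with
  | basic A => exact hχ A
  | id x => exact F.id_mem x
  | comp f g _ _ hf hg => exact F.comp_mem f g hf hg
  | iso f g e₁ e₂ w _ hf => exact (F.arrow_mk_iso_iff (Arrow.isoMk e₁ e₂ w)).1 hf

section Cartesian

variable {T : Type u} [Category.{v} T] {P : ObjectProperty (Arrow T)}

lemma isCartesianAt_of_isPullback {A B : P.FullSubcategory} {φ : A ⟶ B}
    (h : IsPullback φ.hom.left A.obj.hom B.obj.hom φ.hom.right) :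
    IsCartesianAt (P.ι ⋙ Arrow.rightFunc) φ := by
  intro Z ψ (g : Z.obj.right ⟶ A.obj.right) (hg : g ≫ φ.hom.right = ψ.hom.right)
  have hw : ψ.hom.left ≫ B.obj.hom = (Z.obj.hom ≫ g) ≫ φ.hom.right := by
    rw [Category.assoc, hg]; exact ψ.hom.w
  refine ⟨ObjectProperty.homMk (Arrow.homMk (h.lift _ _ hw) g (h.lift_snd _ _ hw)),
    ⟨?_, rfl⟩, ?_⟩
  · exact ObjectProperty.hom_ext _ (Arrow.hom_ext _ _ (h.lift_fst _ _ hw) hg)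
  · rintro l ⟨rfl, (hl : l.hom.right = g)⟩
    refine ObjectProperty.hom_ext _ (Arrow.hom_ext _ _ (h.hom_ext ?_ ?_) hl)
    · simp
    · simp [← hl]

lemma IsCartesianAt.isPullback (hP : ∀ x : T, P (Arrow.mk (𝟙 x))) {A B : P.FullSubcategory}
    {φ : A ⟶ B} (hφ : IsCartesianAt (P.ι ⋙ Arrow.rightFunc) φ) :
    IsPullback φ.hom.left A.obj.hom B.obj.hom φ.hom.right := by
  let Z (s : PullbackCone B.obj.hom φ.hom.right) : P.FullSubcategory :=
    ⟨Arrow.mk (𝟙 s.pt), hP s.pt⟩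
  let ψ (s : PullbackCone B.obj.hom φ.hom.right) : Z s ⟶ B :=
    ObjectProperty.homMk (Arrow.homMk s.fst (s.snd ≫ φ.hom.right) (by simp [Z, s.condition]))
  choose l hl huniq using fun s => hφ (Z s) (ψ s) s.snd rfl
  refine .of_isLimit (PullbackCone.IsLimit.mk (Arrow.w φ.hom) (fun s => (l s).hom.left)
    (fun s => ?_) (fun s => ?_) (fun s m h₁ h₂ => ?_))
  · exact congrArg (fun k => k.hom.left) (hl s).1
  · exact (l s).hom.w.trans ((Category.id_comp _).trans (hl s).2)
  · have hm : ObjectProperty.homMk (Arrow.homMk m s.snd (by simpa [Z] using h₂)) = l s :=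
      huniq s _ ⟨ObjectProperty.hom_ext _ (Arrow.hom_ext _ _ h₁ rfl), rfl⟩
    exact congrArg (fun k => k.hom.left) hm

end Cartesian

namespace TribeStruct

variable {T : Type u} [Category.{v} T] (R : TribeStruct T)

instance isMultiplicative_fib : R.Fib.IsMultiplicative where
  id_mem := R.fib_id
  comp_mem := R.fib_comp

lemma isomorphisms_le_fib : MorphismProperty.isomorphisms T ≤ R.Fib :=
  fun _ y e (_ : IsIso e) =>
    R.fib_stable (IsPullback.of_horiz_isIso (f := 𝟙 y) (g := 𝟙 y) ⟨rfl⟩) (R.fib_id y)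

instance respectsIso_fib : R.Fib.RespectsIso :=
  MorphismProperty.respectsIso_of_isStableUnderComposition R.isomorphisms_le_fib

variable {R}

lemma anodyne_map_of_isPullback_of_fib {Γ Δ u w u' w' : T} {pu : u ⟶ Γ} {pw : w ⟶ Γ}
    {r : u ⟶ w} {t : Δ ⟶ Γ} {fu : u' ⟶ u} {pu' : u' ⟶ Δ} {fw : w' ⟶ w} {pw' : w' ⟶ Δ}
    {r' : u' ⟶ w'} (hu : IsPullback fu pu' pu t) (hw : IsPullback fw pw' pw t)
    (hcomm : r ≫ pw = pu) (h₁ : r' ≫ fw = fu ≫ r) (h₂ : r' ≫ pw' = pu')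
    (hr : Anodyne R.Fib r) (ht : R.Fib t) : Anodyne R.Fib r' := by
  have hu' : IsPullback fu (r' ≫ pw') (r ≫ pw) t := by rwa [h₂, hcomm]
  exact R.anodyne_stable (hu'.of_bot h₁.symm hw) hr (R.fib_stable hw ht)

lemma anodyne_comparison_of_isPullback_comp {Γ Δ Δ' w w' w'' : T} {pw : w ⟶ Γ}
    {j : Δ ⟶ Δ'} {t : Δ' ⟶ Γ} {fw : w' ⟶ w} {pw' : w' ⟶ Δ} {fw' : w'' ⟶ w}
    {pw'' : w'' ⟶ Δ'} {m : w' ⟶ w''} (hw : IsPullback fw pw' pw (j ≫ t))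
    (hw' : IsPullback fw' pw'' pw t) (h₁ : m ≫ fw' = fw) (h₂ : m ≫ pw'' = pw' ≫ j)
    (hj : Anodyne R.Fib j) (hpw : R.Fib pw) : Anodyne R.Fib m := by
  have hw'' : IsPullback (m ≫ fw') pw' pw (j ≫ t) := by rwa [h₁]
  exact R.anodyne_stable (hw''.of_right h₂ hw').flip hj (R.fib_stable hw'.flip hpw)

theorem stablyAnodyneOver {Γ u w : T} {pu : u ⟶ Γ} {pw : w ⟶ Γ} {r : u ⟶ w}
    (hpu : R.Fib pu) (hpw : R.Fib pw) (hr : Anodyne R.Fib r) (hcomm : r ≫ pw = pu) :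
    StablyAnodyneOver R.Fib pu pw r := by
  refine ⟨hr, fun {Δ u' w'} σ fu pu' fw pw' r' hu hw h₁ h₂ => ?_⟩
  obtain ⟨Δ', j, t, hj, ht, rfl⟩ := R.factor σ
  have := R.pullback_exists pu t ht
  have := R.pullback_exists pw t ht
  have hU := IsPullback.of_hasPullback pu t
  have hW := IsPullback.of_hasPullback pw t
  let rₜ := hW.lift (pullback.fst pu t ≫ r) (pullback.snd pu t)
    (by simp [hcomm, pullback.condition])
  let mᵤ := hU.lift fu (pu' ≫ j) (by simp [hu.w])
  let m := hW.lift fw (pw' ≫ j) (by simp [hw.w])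
  have hrₜ : Anodyne R.Fib rₜ :=
    anodyne_map_of_isPullback_of_fib hU hW hcomm (hW.lift_fst ..) (hW.lift_snd ..) hr ht
  have hmᵤ : Anodyne R.Fib mᵤ :=
    anodyne_comparison_of_isPullback_comp hu hU (hU.lift_fst ..) (hU.lift_snd ..) hj hpu
  have hm : Anodyne R.Fib m :=
    anodyne_comparison_of_isPullback_comp hw hW (hW.lift_fst ..) (hW.lift_snd ..) hj hpw
  obtain ⟨ρ, hρ⟩ := hj.exists_retraction_s19 (R.all_fibrant Δ) (R.isTerminal.from Δ')
    (R.isTerminal.hom_ext _ _)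
  obtain ⟨ρm, hρm⟩ :=
    hm.exists_retraction_s19 (R.fib_stable hw.flip hpw) (pullback.snd pw t ≫ ρ) (by simp [m, hρ])
  have hsquare : r' ≫ m = mᵤ ≫ rₜ :=
    hW.hom_ext (by simp [m, mᵤ, rₜ, h₁]) (by simp [m, mᵤ, rₜ, ← h₂])
  exact Anodyne.of_comp_of_retraction hρm (hsquare ▸ hmᵤ.comp hrₜ)

end TribeStruct


namespace TribeStruct

variable {T : Type u} [Category.{v} T] (R : TribeStruct T)

abbrev fibArrow : ObjectProperty (Arrow T) := fun f => R.Fib f.hom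

lemma compFib_of_fib {x y : T} {f : x ⟶ y} (hf : R.Fib f) :
    CompFib (R.fibArrow.ι ⋙ Arrow.rightFunc) R.fibArrow.ι f :=
  CompFib.basic (A := (⟨Arrow.mk f, hf⟩ : R.fibArrow.FullSubcategory))

lemma compFibProp_eq :
    compFibProp (R.fibArrow.ι ⋙ Arrow.rightFunc) R.fibArrow.ι = R.Fib :=
  le_antisymm (compFibProp_le fun A => A.property) fun _ _ _ => R.compFib_of_fib

noncomputable def factorization {x y : T} (f : x ⟶ y) :
    MorphismProperty.MapFactorizationData (Anodyne R.Fib) R.Fib f :=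
  Classical.choice <| by
    obtain ⟨z, i, q, hi, hq, fac⟩ := R.factor f
    exact ⟨{ Z := z, i := i, p := q, fac := fac, hi := hi, hp := hq }⟩

noncomputable def categoricalModel :
    CategoricalModel (R.fibArrow.ι ⋙ Arrow.rightFunc) R.fibArrow.ι where
  term := R.term
  isTerminal := R.isTerminal
  isOver _ := rfl
  full f := ⟨ObjectProperty.homMk f, rfl⟩
  faithful _ _ := ObjectProperty.hom_ext _
  grothendieck A x (f : x ⟶ A.obj.right) := by
    have := R.pullback_exists f A.obj.hom A.property
    exact ⟨⟨Arrow.mk (pullback.fst f A.obj.hom),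
        R.fib_stable (.of_hasPullback _ _) A.property⟩,
      ObjectProperty.homMk (Arrow.homMk (pullback.snd _ _) f pullback.condition.symm), rfl,
      isCartesianAt_of_isPullback (IsPullback.of_hasPullback _ _).flip, (Category.id_comp f).symm⟩
  cart_pullback _ hφ := hφ.isPullback R.fib_id
  all_fibrant Γ := R.compFib_of_fib (R.all_fibrant Γ)
  sigma A B h := ⟨⟨Arrow.mk (B.obj.hom ≫ eqToHom h ≫ A.obj.hom),
    R.Fib.comp_mem _ _ B.property (R.Fib.comp_mem _ _ (R.Fib.of_isIso _) A.property)⟩,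
    rfl, ⟨Iso.refl _⟩⟩
  idI _ _ _ _ hP := (R.factorization (hP.lift (𝟙 _) (𝟙 _) (by simp))).Z
  idr _ _ _ _ hP := (R.factorization (hP.lift (𝟙 _) (𝟙 _) (by simp))).i
  idπ _ _ _ _ hP := (R.factorization (hP.lift (𝟙 _) (𝟙 _) (by simp))).p
  id_fac _ _ _ _ _ := (R.factorization _).fac
  idπ_fib _ _ _ _ _ := R.compFib_of_fib (R.factorization _).hp
  idr_stable q hq p₁ _ hP := by
    replace hq : R.Fib q := R.compFibProp_eq ▸ hq
    rw [compFibProp_eq]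
    exact R.stablyAnodyneOver hq
      (R.Fib.comp_mem _ _ (R.factorization _).hp (R.Fib.comp_mem _ _ (R.fib_stable hP hq) hq))
      (R.factorization _).hi (by simp)

end TribeStruct

end Paper

open Paper in
/-- Every tribe `T` gives rise to a categorical model of type
theory: with `T^{[1]}_f` the full subcategory of the arrow category spanned by
the fibrations, `χ` the inclusion and `p = cod ∘ χ`, the triple
`(T, T^{[1]}_f, χ)` is a comprehension category with strong `Σ`-types and
weakly stable `Id`-types in which all objects are fibrant. -/
theorem tribe_gives_categoricalModel
    {T : Type u} [Category.{v} T] (R : Paper.TribeStruct T) :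
    Nonempty (Paper.CategoricalModel
      (Ctx := T) (Ty := CategoryTheory.ObjectProperty.FullSubcategory (fun f : Arrow T => R.Fib f.hom))
      (CategoryTheory.ObjectProperty.ι _ ⋙ Arrow.rightFunc)
      (CategoryTheory.ObjectProperty.ι _)) :=
  ⟨R.categoricalModel⟩
end
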